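/- Let √2 − 1 < α < 1 and let X be an ℕ-valued random variable satisfying the recursive distributional equation. Then there exists δ > 0 such that for all s ∈ (1−δ, 1), G(s) = Q₋(s) = (1/2)((2−p)s + p − √(((2−p)s + p)² − 4s·exp(α(s−1)))). -/

import Mathlib

open scoped ENNReal

/-- The Poisson(α) probability mass function on ℕ. -/
noncomputable def poissonPMF (α : ℝ) (k : ℕ) : ℝ≥0∞ :=
  ENNReal.ofReal (Real.exp (-α) * α ^ k / (Nat.factorial k))

/-- The Geometric(1/2) pmf: P(N = k) = (1/2)^(k+1) for k ≥ 0. -/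
noncomputable def geomHalf (k : ℕ) : ℝ≥0∞ := (1 / 2) ^ (k + 1)

/-- The law of (X - 1)⁺ when X has law μ on ℕ. -/
noncomputable def shiftLaw (μ : ℕ → ℝ≥0∞) (k : ℕ) : ℝ≥0∞ :=
  if k = 0 then μ 0 + μ 1 else μ (k + 1)

/-- Convolution of two (sub-)pmfs on ℕ: the law of an independent sum. -/
noncomputable def convAdd (f g : ℕ → ℝ≥0∞) (k : ℕ) : ℝ≥0∞ :=
  ∑ j ∈ Finset.range (k + 1), f j * g (k - j)

/-- n-fold convolution of a pmf on ℕ: the law of a sum of n i.i.d. copies. -/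
noncomputable def iterConv (f : ℕ → ℝ≥0∞) : ℕ → ℕ → ℝ≥0∞
  | 0 => fun k => if k = 0 then 1 else 0
  | n + 1 => convAdd (iterConv f n) f

/-- μ is the law of an ℕ-valued random variable X satisfying the RDE
    X =_d P + ∑_{i=1}^N (X_i - 1)⁺, with P ~ Poisson(α), N ~ Geom(1/2),
    X_i i.i.d. with law μ, all independent. -/
def SatisfiesRDE (α : ℝ) (μ : ℕ → ℝ≥0∞) : Prop :=
  (∑' k, μ k) = 1 ∧
  ∀ k, μ k = ∑' n, geomHalf n * convAdd (poissonPMF α) (iterConv (shiftLaw μ) n) k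

/-- The probability generating function G(s) = E[s^X]. -/
noncomputable def pgf (μ : ℕ → ℝ≥0∞) (s : ℝ) : ℝ := ∑' k, (μ k).toReal * s ^ k

/-- The mean E[X] = ∑ k · P(X = k), valued in [0,∞]. -/
noncomputable def meanENN (μ : ℕ → ℝ≥0∞) : ℝ≥0∞ := ∑' k : ℕ, (k : ℝ≥0∞) * μ k

/-!
Taking generating functions in the RDE, with `H` the generating function of `(X - 1)⁺`, gives
`2G = exp (α (s - 1)) + G H` and `s H + p = G + p s`. Eliminating `H`, `G(s)` is a root of
`G² - b G + s exp (α (s - 1)) = 0` with `b = (2 - p) s + p`, i.e. `(2G - b)² = D(s)` where `D` is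
the discriminant. It remains to pick the root near `s = 1`. As `D ≥ 0` on `[0, 1]` and `D 1 = 0`,
`D'(1) = 4 (1 - p - α) ≤ 0`; equality is excluded because then `D''(1) = 2 (2 - (1 + α)²) < 0`
for `α > √2 - 1`. So `D` vanishes only linearly at `1`, whereas `G ≤ 1` gives
`2G - b ≤ (2 - p)(1 - s)`, so a nonnegative `2G - b` would make `D = (2G - b)²` vanish
quadratically; hence `2G - b = -√D` near `1`.

The generating-function identities are proved in `ℝ≥0∞`, where every series converges, and then
transferred to `ℝ` on `[0, 1]`.
-/

open Filter Topology Set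

noncomputable def pgfENN (f : ℕ → ℝ≥0∞) (x : ℝ≥0∞) : ℝ≥0∞ := ∑' k, f k * x ^ k

theorem ENNReal.tsum_mul_tsum_eq_tsum_sum_range (a b : ℕ → ℝ≥0∞) :
    (∑' n, a n) * ∑' n, b n = ∑' n, ∑ j ∈ Finset.range (n + 1), a j * b (n - j) := by
  have hprod : (∑' n, a n) * ∑' n, b n = ∑' q : ℕ × ℕ, a q.1 * b q.2 := by
    simp_rw [ENNReal.tsum_prod', ENNReal.tsum_mul_left, ENNReal.tsum_mul_right]
  rw [hprod, ← (Finset.HasAntidiagonal.sigmaAntidiagonalEquivProd).tsum_eq, ENNReal.tsum_sigma']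
  refine tsum_congr fun n => ?_
  simp only [tsum_fintype, Finset.HasAntidiagonal.sigmaAntidiagonalEquivProd_apply]
  rw [Finset.sum_coe_sort (Finset.HasAntidiagonal.antidiagonal n) (fun q => a q.1 * b q.2),
    Finset.Nat.sum_antidiagonal_eq_sum_range_succ_mk]

theorem pgfENN_convAdd (f g : ℕ → ℝ≥0∞) (x : ℝ≥0∞) :
    pgfENN (convAdd f g) x = pgfENN f x * pgfENN g x := by
  rw [pgfENN, pgfENN, pgfENN, ENNReal.tsum_mul_tsum_eq_tsum_sum_range]
  refine tsum_congr fun k => ?_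
  rw [convAdd, Finset.sum_mul]
  refine Finset.sum_congr rfl fun j hj => ?_
  rw [← pow_mul_pow_sub x (Finset.mem_range_succ_iff.1 hj)]
  ring

theorem pgfENN_iterConv (f : ℕ → ℝ≥0∞) (x : ℝ≥0∞) (n : ℕ) :
    pgfENN (iterConv f n) x = pgfENN f x ^ n := by
  induction n with
  | zero => simp [pgfENN, iterConv]
  | succ n ih => rw [iterConv, pgfENN_convAdd, ih, pow_succ]

theorem two_mul_tsum_geomHalf_mul_pow (r : ℝ≥0∞) :
    2 * ∑' n, geomHalf n * r ^ n = 1 + r * ∑' n, geomHalf n * r ^ n := by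
  have hS : ∑' n, geomHalf n * r ^ n = 2⁻¹ + 2⁻¹ * (r * ∑' n, geomHalf n * r ^ n) := by
    rw [← ENNReal.tsum_mul_left, ← ENNReal.tsum_mul_left, tsum_eq_zero_add' ENNReal.summable]
    congr 1
    · simp [geomHalf]
    · refine tsum_congr fun n => ?_
      simp only [geomHalf, pow_succ, one_div]
      ring
  set S := ∑' n, geomHalf n * r ^ n
  calc 2 * S = 2 * 2⁻¹ + 2 * 2⁻¹ * (r * S) := by
        conv_lhs => rw [hS]
        ring
    _ = 1 + r * S := by rw [ENNReal.mul_inv_cancel two_ne_zero ENNReal.ofNat_ne_top, one_mul]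

theorem pgfENN_eq_of_satisfiesRDE {α : ℝ} {μ : ℕ → ℝ≥0∞} (hμ : SatisfiesRDE α μ) (x : ℝ≥0∞) :
    pgfENN μ x = pgfENN (poissonPMF α) x * ∑' n, geomHalf n * pgfENN (shiftLaw μ) x ^ n := by
  calc pgfENN μ x
      = ∑' k, ∑' n, geomHalf n * (convAdd (poissonPMF α) (iterConv (shiftLaw μ) n) k * x ^ k) := by
        refine tsum_congr fun k => ?_
        rw [hμ.2 k, ← ENNReal.tsum_mul_right]
        simp only [mul_assoc]
    _ = ∑' n, geomHalf n * pgfENN (convAdd (poissonPMF α) (iterConv (shiftLaw μ) n)) x := by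
        rw [ENNReal.tsum_comm]
        simp only [ENNReal.tsum_mul_left, pgfENN]
    _ = _ := by
        simp only [pgfENN_convAdd, pgfENN_iterConv, ← ENNReal.tsum_mul_left]
        exact tsum_congr fun n => by ring

theorem two_mul_pgfENN_eq_of_satisfiesRDE {α : ℝ} {μ : ℕ → ℝ≥0∞} (hμ : SatisfiesRDE α μ)
    (x : ℝ≥0∞) :
    2 * pgfENN μ x = pgfENN (poissonPMF α) x + pgfENN μ x * pgfENN (shiftLaw μ) x := by
  rw [pgfENN_eq_of_satisfiesRDE hμ, mul_left_comm, two_mul_tsum_geomHalf_mul_pow]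
  ring

theorem pgfENN_poissonPMF {α : ℝ} (hα : 0 ≤ α) {s : ℝ} (hs : 0 ≤ s) :
    pgfENN (poissonPMF α) (ENNReal.ofReal s) = ENNReal.ofReal (Real.exp (α * (s - 1))) := by
  have hterm : ∀ k : ℕ, poissonPMF α k * ENNReal.ofReal s ^ k
      = ENNReal.ofReal (Real.exp (-α) * ((α * s) ^ k / k.factorial)) := by
    intro k
    rw [poissonPMF, ← ENNReal.ofReal_pow hs, ← ENNReal.ofReal_mul (by positivity), mul_pow]
    ring_nf
  have hexp : ∑' k : ℕ, (α * s) ^ k / k.factorial = Real.exp (α * s) := by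
    rw [Real.exp_eq_exp_ℝ, NormedSpace.exp_eq_tsum_div]
  have hsum := (Real.summable_pow_div_factorial (α * s)).mul_left (Real.exp (-α))
  rw [pgfENN, tsum_congr hterm, ← ENNReal.ofReal_tsum_of_nonneg (fun k => by positivity) hsum,
    tsum_mul_left, hexp, ← Real.exp_add]
  ring_nf

theorem shiftLaw_zero (μ : ℕ → ℝ≥0∞) : shiftLaw μ 0 = μ 0 + μ 1 :=
  if_pos rfl

theorem shiftLaw_succ (μ : ℕ → ℝ≥0∞) (k : ℕ) : shiftLaw μ (k + 1) = μ (k + 2) :=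
  if_neg k.succ_ne_zero

theorem tsum_shiftLaw (μ : ℕ → ℝ≥0∞) : ∑' k, shiftLaw μ k = ∑' k, μ k := by
  rw [tsum_eq_zero_add' ENNReal.summable, tsum_eq_zero_add' (f := μ) ENNReal.summable,
    tsum_eq_zero_add' (f := fun n => μ (n + 1)) ENNReal.summable]
  simp only [shiftLaw_succ, shiftLaw_zero]
  ring

theorem mul_pgfENN_shiftLaw_add (μ : ℕ → ℝ≥0∞) (x : ℝ≥0∞) :
    x * pgfENN (shiftLaw μ) x + μ 0 = pgfENN μ x + μ 0 * x := by
  rw [pgfENN, pgfENN, ← ENNReal.tsum_mul_left, tsum_eq_zero_add' ENNReal.summable,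
    tsum_eq_zero_add' (f := fun k => μ k * x ^ k) ENNReal.summable,
    tsum_eq_zero_add' (f := fun k => μ (k + 1) * x ^ (k + 1)) ENNReal.summable]
  have hterm (k : ℕ) :
      x * (shiftLaw μ (k + 1) * x ^ (k + 1)) = μ (k + 1 + 1) * x ^ (k + 1 + 1) := by
    rw [shiftLaw_succ, pow_succ x (k + 1)]
    ring
  simp only [hterm, shiftLaw_zero, zero_add, pow_zero, pow_one]
  ring

theorem toReal_pgfENN_ofReal {f : ℕ → ℝ≥0∞} (hf : ∀ k, f k ≠ ∞) {s : ℝ} (hs : 0 ≤ s) :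
    (pgfENN f (ENNReal.ofReal s)).toReal = pgf f s := by
  rw [pgfENN, ENNReal.tsum_toReal_eq fun k => ENNReal.mul_ne_top (hf k) (by simp)]
  simp only [ENNReal.toReal_mul, ENNReal.toReal_pow, ENNReal.toReal_ofReal hs, pgf]

theorem pgfENN_le_one {f : ℕ → ℝ≥0∞} (hf : ∑' k, f k = 1) {x : ℝ≥0∞} (hx : x ≤ 1) :
    pgfENN f x ≤ 1 :=
  hf ▸ ENNReal.tsum_le_tsum fun _ => mul_le_of_le_one_right' (pow_le_one₀ zero_le hx)

theorem pgf_le_one {f : ℕ → ℝ≥0∞} (hf : ∑' k, f k = 1) {s : ℝ} (hs : s ∈ Icc 0 1) :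
    pgf f s ≤ 1 := by
  rw [← toReal_pgfENN_ofReal (ENNReal.ne_top_of_tsum_ne_top (hf ▸ ENNReal.one_ne_top)) hs.1]
  exact ENNReal.toReal_le_of_le_ofReal zero_le_one
    (ENNReal.ofReal_one ▸ pgfENN_le_one hf (ENNReal.ofReal_le_one.2 hs.2))

theorem eventually_nhdsLT_lt_of_hasDerivAt_pos {f : ℝ → ℝ} {f' x : ℝ} (hf : HasDerivAt f f' x)
    (hf' : 0 < f') : ∀ᶠ s in 𝓝[<] x, f s < f x := by
  filter_upwards [(hasDerivAt_iff_tendsto_slope_left_right.1 hf).1.eventually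
    (eventually_gt_nhds hf'), self_mem_nhdsWithin] with s hs hsx
  exact (slope_pos_iff_gt hsx).1 hs

theorem eventually_nhdsLT_lt_of_hasDerivAt_deriv_neg {f f' : ℝ → ℝ} {f'' x : ℝ}
    (hf : ∀ y, HasDerivAt f (f' y) y) (hf' : HasDerivAt f' f'' x) (hx : f' x = 0)
    (hf'' : f'' < 0) : ∀ᶠ s in 𝓝[<] x, f s < f x := by
  have hpos : ∀ᶠ s in 𝓝[<] x, 0 < f' s := by
    simpa [hx] using eventually_nhdsLT_lt_of_hasDerivAt_pos hf'.neg (neg_pos.2 hf'')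
  obtain ⟨l, hl, hsub⟩ := mem_nhdsLT_iff_exists_Ioo_subset.1 hpos
  filter_upwards [Ioo_mem_nhdsLT hl] with s hs
  obtain ⟨c, hc, hslope⟩ := exists_hasDerivAt_eq_slope f f' hs.2
    (fun y _ => (hf y).continuousAt.continuousWithinAt) (fun y _ => hf y)
  have : 0 < (f x - f s) / (x - s) := hslope ▸ hsub ⟨hs.1.trans hc.1, hc.2⟩
  exact sub_pos.1 ((div_pos_iff_of_pos_right (sub_pos.2 hs.2)).1 this)

section Discriminant

variable (α p : ℝ)

noncomputable def disc (s : ℝ) : ℝ :=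
  ((2 - p) * s + p) ^ 2 - 4 * s * Real.exp (α * (s - 1))

noncomputable def discDeriv (s : ℝ) : ℝ :=
  2 * (2 - p) * ((2 - p) * s + p) - 4 * (1 + α * s) * Real.exp (α * (s - 1))

theorem disc_one : disc α p 1 = 0 := by
  norm_num [disc]

theorem discDeriv_one : discDeriv α p 1 = -4 * (p + α - 1) := by
  norm_num [discDeriv]
  ring

theorem hasDerivAt_exp_mul_sub_one (s : ℝ) :
    HasDerivAt (fun t => Real.exp (α * (t - 1))) (α * Real.exp (α * (s - 1))) s := by
  convert (((hasDerivAt_id' s).sub_const 1).const_mul α).exp using 1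
  ring

theorem hasDerivAt_disc (s : ℝ) : HasDerivAt (disc α p) (discDeriv α p s) s := by
  have h := ((((hasDerivAt_id' s).const_mul (2 - p)).add_const p).pow 2).sub
    (((hasDerivAt_id' s).const_mul 4).mul (hasDerivAt_exp_mul_sub_one α s))
  exact h.congr_deriv (by simp only [discDeriv]; push_cast; ring)

theorem hasDerivAt_discDeriv (s : ℝ) : HasDerivAt (discDeriv α p)
    (2 * (2 - p) ^ 2 - α * (8 + 4 * α * s) * Real.exp (α * (s - 1))) s := by
  have h := ((((hasDerivAt_id' s).const_mul (2 - p)).add_const p).const_mul (2 * (2 - p))).sub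
    ((((hasDerivAt_id' s).const_mul α).const_add 1).const_mul 4 |>.mul
      (hasDerivAt_exp_mul_sub_one α s))
  exact h.congr_deriv (by ring)

theorem one_sub_lt_of_eventually_disc_nonneg (hα : 2 < (1 + α) ^ 2)
    (h : ∀ᶠ s in 𝓝[<] 1, 0 ≤ disc α p s) : 1 - α < p := by
  by_contra! hp
  have hlt : ∀ᶠ s in 𝓝[<] (1 : ℝ), disc α p s < disc α p 1 := by
    rcases hp.lt_or_eq with hp | rfl
    · exact eventually_nhdsLT_lt_of_hasDerivAt_pos (hasDerivAt_disc α p 1)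
        (by rw [discDeriv_one]; linarith)
    · refine eventually_nhdsLT_lt_of_hasDerivAt_deriv_neg (hasDerivAt_disc α _)
        (hasDerivAt_discDeriv α _ 1) (by rw [discDeriv_one]; ring) ?_
      norm_num
      nlinarith
  obtain ⟨s, hs0, hs⟩ := (h.and hlt).exists
  rw [disc_one] at hs
  linarith

theorem eventually_mul_sq_lt_disc (hp : 1 - α < p) (K : ℝ) :
    ∀ᶠ s in 𝓝[<] 1, K * (1 - s) ^ 2 < disc α p s := by
  have hg : HasDerivAt (fun s => K * (1 - s) ^ 2 - disc α p s) (-discDeriv α p 1) 1 := by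
    have h := ((((hasDerivAt_id' (1 : ℝ)).const_sub 1).pow 2).const_mul K).sub
      (hasDerivAt_disc α p 1)
    exact h.congr_deriv (by simp)
  filter_upwards [eventually_nhdsLT_lt_of_hasDerivAt_pos hg
    (by rw [discDeriv_one]; linarith)] with s hs
  norm_num [disc_one] at hs
  linarith

end Discriminant

theorem eq_half_mul_sub_sqrt {G b D : ℝ} (hG : G ≤ 1) (hD : (2 - b) ^ 2 < D)
    (hq : (2 * G - b) ^ 2 = D) : G = 1 / 2 * (b - √D) := by
  have hneg : 2 * G - b ≤ 0 := by
    by_contra! h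
    nlinarith
  rw [← hq, Real.sqrt_sq_eq_abs, abs_of_nonpos hneg]
  ring

theorem sq_two_mul_pgf_sub_eq_disc {α : ℝ} (hα : 0 ≤ α) {μ : ℕ → ℝ≥0∞}
    (hμ : SatisfiesRDE α μ) {s : ℝ} (hs : s ∈ Icc 0 1) :
    (2 * pgf μ s - ((2 - (μ 0).toReal) * s + (μ 0).toReal)) ^ 2 = disc α (μ 0).toReal s := by
  have hμ_top := ENNReal.ne_top_of_tsum_ne_top (hμ.1 ▸ ENNReal.one_ne_top)
  have hν_one : ∑' k, shiftLaw μ k = 1 := (tsum_shiftLaw μ).trans hμ.1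
  have hν_top := ENNReal.ne_top_of_tsum_ne_top (hν_one ▸ ENNReal.one_ne_top)
  set x := ENNReal.ofReal s
  have hx : x ≤ 1 := ENNReal.ofReal_le_one.2 hs.2
  have hG := (pgfENN_le_one hμ.1 hx).trans_lt ENNReal.one_lt_top |>.ne
  have hH := (pgfENN_le_one hν_one hx).trans_lt ENNReal.one_lt_top |>.ne
  have hrde : 2 * pgf μ s = Real.exp (α * (s - 1)) + pgf μ s * pgf (shiftLaw μ) s := by
    have h := congrArg ENNReal.toReal (two_mul_pgfENN_eq_of_satisfiesRDE hμ x)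
    rwa [pgfENN_poissonPMF hα hs.1, ENNReal.toReal_mul,
      ENNReal.toReal_add ENNReal.ofReal_ne_top (ENNReal.mul_ne_top hG hH), ENNReal.toReal_mul,
      ENNReal.toReal_ofReal (Real.exp_pos _).le, toReal_pgfENN_ofReal hμ_top hs.1,
      toReal_pgfENN_ofReal hν_top hs.1, ENNReal.toReal_ofNat] at h
  have hshift : s * pgf (shiftLaw μ) s + (μ 0).toReal = pgf μ s + (μ 0).toReal * s := by
    have h := congrArg ENNReal.toReal (mul_pgfENN_shiftLaw_add μ x)
    rwa [ENNReal.toReal_add (ENNReal.mul_ne_top ENNReal.ofReal_ne_top hH) (hμ_top 0),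
      ENNReal.toReal_add hG (ENNReal.mul_ne_top (hμ_top 0) ENNReal.ofReal_ne_top),
      ENNReal.toReal_mul, ENNReal.toReal_mul, ENNReal.toReal_ofReal hs.1,
      toReal_pgfENN_ofReal hμ_top hs.1, toReal_pgfENN_ofReal hν_top hs.1] at h
  rw [disc]
  linear_combination (-4 * s) * hrde + (-4 * pgf μ s) * hshift

theorem pgf_eq_Qminus_near_one_large_alpha_general
    (α : ℝ) (hα0 : Real.sqrt 2 - 1 < α)
    (μ : ℕ → ℝ≥0∞) (hμ : SatisfiesRDE α μ)
    (p : ℝ) (hp : p = (μ 0).toReal) :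
    ∃ δ > (0 : ℝ), ∀ s ∈ Set.Ioo (1 - δ) 1,
      pgf μ s = (1 / 2) * ((2 - p) * s + p -
        Real.sqrt (((2 - p) * s + p) ^ 2 - 4 * s * Real.exp (α * (s - 1)))) := by
  have hα : 0 < α := by linarith [Real.one_lt_sqrt_two]
  have hα2 : 2 < (1 + α) ^ 2 := Real.lt_sq_of_sqrt_lt (by linarith)
  subst hp
  have hquad (s : ℝ) (hs : s ∈ Icc 0 1) := sq_two_mul_pgf_sub_eq_disc hα.le hμ hs
  have hIcc : ∀ᶠ s in 𝓝[<] (1 : ℝ), s ∈ Icc 0 1 :=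
    mem_of_superset (Ioo_mem_nhdsLT zero_lt_one) Ioo_subset_Icc_self
  have hpα := one_sub_lt_of_eventually_disc_nonneg α _ hα2
    (hIcc.mono fun s hs => hquad s hs ▸ sq_nonneg _)
  obtain ⟨l, hl, hsub⟩ := mem_nhdsLT_iff_exists_Ioo_subset.1
    ((eventually_mul_sq_lt_disc α _ hpα ((2 - (μ 0).toReal) ^ 2)).and hIcc)
  refine ⟨1 - l, sub_pos.2 hl, fun s hs => ?_⟩
  obtain ⟨hlt, hs01⟩ := hsub ⟨by linarith [hs.1], hs.2⟩
  exact eq_half_mul_sub_sqrt (D := disc α _ s) (pgf_le_one hμ.1 hs01)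
    (by convert hlt using 1; ring) (hquad s hs01)

/-- For √2 − 1 < α < 1, there exists δ > 0 such that G(s) = Q₋(s) for
all s ∈ (1−δ, 1). -/
theorem pgf_eq_Qminus_near_one_large_alpha
    (α : ℝ) (hα0 : Real.sqrt 2 - 1 < α) (hα1 : α < 1)
    (μ : ℕ → ℝ≥0∞) (hμ : SatisfiesRDE α μ)
    (p : ℝ) (hp : p = (μ 0).toReal) :
    ∃ δ > (0 : ℝ), ∀ s ∈ Set.Ioo (1 - δ) 1,
      pgf μ s = (1 / 2) * ((2 - p) * s + p -
        Real.sqrt (((2 - p) * s + p) ^ 2 - 4 * s * Real.exp (α * (s - 1)))) :=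
  pgf_eq_Qminus_near_one_large_alpha_general α hα0 μ hμ p hp
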